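/- Not every doubly stochastic matrix is unistochastic: there exists a 3×3 doubly stochastic matrix T such that no 3×3 unitary U satisfies T_{ij} = |U_{ij}|² for all i, j. -/

import Mathlib

/-!
Take `T` with zero diagonal and all off-diagonal entries `1/2`. If `T = |U|²` entrywise with `U`
unitary, then `U 0 0 = U 1 1 = 0`, so the orthogonality of the first two rows of `U` collapses
to the single term `U 0 2 * conj (U 1 2) = 0`, although both factors have modulus `1/√2`.
-/

open Matrix Finset

def Matrix.IsUnistochastic {n : Type*} [Fintype n] [DecidableEq n] (T : Matrix n n ℝ) : Prop :=
  ∃ U ∈ unitaryGroup n ℂ, ∀ i j, T i j = ‖U i j‖ ^ 2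

theorem Matrix.sum_mul_star_eq_zero_of_mem_unitaryGroup {n α : Type*} [Fintype n] [DecidableEq n]
    [CommRing α] [StarRing α] {U : Matrix n n α} (hU : U ∈ unitaryGroup n α) {i k : n}
    (hik : i ≠ k) : ∑ j, U i j * star (U k j) = 0 := by
  have h := congrFun₂ (mem_unitaryGroup_iff.mp hU) i k
  simpa [mul_apply, one_apply_ne hik] using h

noncomputable def halfOffDiagonal : Matrix (Fin 3) (Fin 3) ℝ :=
  of fun i j => if i = j then 0 else 1 / 2

theorem halfOffDiagonal_mem_doublyStochastic : halfOffDiagonal ∈ doublyStochastic ℝ (Fin 3) := by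
  refine mem_doublyStochastic_iff_sum.mpr ⟨fun i j => ?_, fun i => ?_, fun j => ?_⟩
  · rw [halfOffDiagonal, of_apply]
    split_ifs <;> norm_num
  · fin_cases i <;> simp [halfOffDiagonal, Fin.sum_univ_three] <;> norm_num
  · fin_cases j <;> simp [halfOffDiagonal, Fin.sum_univ_three] <;> norm_num

theorem not_isUnistochastic_halfOffDiagonal : ¬ halfOffDiagonal.IsUnistochastic := by
  rintro ⟨U, hU, hT⟩
  have hdiag (i : Fin 3) : U i i = 0 := by
    simpa [halfOffDiagonal] using (hT i i).symm
  have hoff {i j : Fin 3} (hij : i ≠ j) : ‖U i j‖ ^ 2 = 1 / 2 := by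
    simpa [halfOffDiagonal, hij] using (hT i j).symm
  have horth : U 0 2 * star (U 1 2) = 0 := by
    simpa [Fin.sum_univ_three, hdiag] using
      sum_mul_star_eq_zero_of_mem_unitaryGroup hU (i := 0) (k := 1) (by decide)
  have hnorm : ‖U 0 2 * star (U 1 2)‖ ^ 2 = 1 / 4 := by
    rw [norm_mul, norm_star, mul_pow, hoff (by decide), hoff (by decide)]
    norm_num
  rw [horth, norm_zero] at hnorm
  norm_num at hnorm

/-- Not every doubly stochastic matrix is unistochastic: there exists a 3×3 doubly
stochastic matrix `T` such that no 3×3 unitary `U` satisfies `T i j = |U i j|²`. -/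
theorem stmt_2 :
    ∃ T : Matrix (Fin 3) (Fin 3) ℝ,
      ((∀ i j, 0 ≤ T i j) ∧ (∀ i, ∑ j, T i j = 1) ∧ (∀ j, ∑ i, T i j = 1)) ∧
      ¬ ∃ U ∈ Matrix.unitaryGroup (Fin 3) ℂ, ∀ i j, T i j = ‖U i j‖ ^ 2 :=
  ⟨halfOffDiagonal, mem_doublyStochastic_iff_sum.mp halfOffDiagonal_mem_doublyStochastic,
    not_isUnistochastic_halfOffDiagonal⟩
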